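/- Let k be a perfect field of odd characteristic p, g ∈ k[u] a polynomial, and q ∈ k[t] a nonconstant polynomial. Let (x₁, y₁) ∈ k[u]² satisfy x₁² − g·y₁² = 1. If there exist X, Y ∈ k[t] such that (X + Y·w)^p = x₁(q) + y₁(q)·w in the ring k[t][w]/(w² − g(q)), then there exist x₀, y₀ ∈ k[u] such that (x₀ + y₀·w)^p = x₁ + y₁·w in the ring k[u][w]/(w² − g). (If the pull-back under u = q(t) of a solution of the Pell equation x² − g y² = 1 is a p-th power in k[t][√(g∘q)], then the solution is already a p-th power in k[u][√g].) -/

import Mathlib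

/-!
Write `p = 2j + 1`. As `w² = g` and Frobenius is additive, `(a + b·w)^p = a^p + b^p·g^j·w`, so the
hypothesis gives `g(q)^j ∣ y₁(q)`, hence `g^j ∣ y₁`: composing with a nonconstant `q` multiplies
degrees, so it cannot turn a nonzero remainder mod `g^j` into a multiple of `g(q)^j`.
With `y₁ = g^j·z` the Pell equation reads `x₁² − g^p·z² = 1`, where `(g^p)' = 0`.
Differentiating gives `x₁·x₁' = g^p·z·z'`; as `x₁` is coprime to `g^p·z` it divides `z'`, which has
degree `< deg z ≤ deg x₁` unless `z' = 0`. So `z' = x₁' = 0`, and over a perfect field `x₁ = x₀^p`,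
`z = y₀^p`, whence `(x₀ + y₀·w)^p = x₁ + g^j·z·w`.
-/

open Polynomial

/-- The element `a + b·w` of `k[s][w]/(w² − h)`. -/
noncomputable def pellElemGen {k : Type*} [Field k] (h a b : Polynomial k) :
    AdjoinRoot ((X : Polynomial (Polynomial k)) ^ 2 - C h) :=
  AdjoinRoot.of _ a + AdjoinRoot.of _ b * AdjoinRoot.root _

theorem add_mul_pow_expChar_of_sq_eq {S : Type*} [CommRing S] {p j : ℕ} [ExpChar S p]
    (hp : p = 2 * j + 1) {w c : S} (hw : w ^ 2 = c) (a b : S) :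
    (a + b * w) ^ p = a ^ p + b ^ p * c ^ j * w := by
  rw [add_pow_expChar, mul_pow, hp, pow_succ w, pow_mul, hw, ← hp]
  ring

namespace AdjoinRoot

variable {R : Type*} [CommRing R] {f : R[X]}

theorem of_add_of_mul_root_inj (hf : f.Monic) (hdeg : 1 < f.natDegree) {a b a' b' : R} :
    of f a + of f b * root f = of f a' + of f b' * root f ↔ a = a' ∧ b = b' := by
  refine ⟨fun h => ?_, by rintro ⟨rfl, rfl⟩; rfl⟩
  nontriviality R
  have hlin : ∀ a b : R, modByMonicHom hf (of f a + of f b * root f) = C b * X + C a := by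
    intro a b
    have hmk : of f a + of f b * root f = mk f (C b * X + C a) := by
      rw [map_add, map_mul, mk_C, mk_C, mk_X, add_comm, mul_comm]
    rw [hmk, modByMonicHom_mk, (modByMonic_eq_self_iff hf).2]
    refine degree_linear_le.trans_lt ?_
    rw [degree_eq_natDegree hf.ne_zero]
    exact_mod_cast hdeg
  have hcoeff := congrArg (modByMonicHom hf) h
  rw [hlin, hlin] at hcoeff
  exact ⟨by simpa using congrArg (coeff · 0) hcoeff, by simpa using congrArg (coeff · 1) hcoeff⟩

end AdjoinRoot

section pellElemGen

variable {k : Type*} [Field k]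

theorem pellElemGen_inj {h a b a' b' : k[X]} :
    pellElemGen h a b = pellElemGen h a' b' ↔ a = a' ∧ b = b' :=
  AdjoinRoot.of_add_of_mul_root_inj (monic_X_pow_sub_C h two_ne_zero)
    (by rw [natDegree_X_pow_sub_C]; norm_num)

theorem pellElemGen_pow_expChar {p j : ℕ} [ExpChar k p] (hp : p = 2 * j + 1) (h a b : k[X]) :
    pellElemGen h a b ^ p = pellElemGen h (a ^ p) (b ^ p * h ^ j) := by
  have : Nontrivial (AdjoinRoot ((X : k[X][X]) ^ 2 - C h)) :=
    AdjoinRoot.nontrivial _ (by rw [degree_X_pow_sub_C two_pos]; norm_num)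
  have : ExpChar (AdjoinRoot ((X : k[X][X]) ^ 2 - C h)) p :=
    expChar_of_injective_algebraMap (algebraMap k _).injective p
  have hroot : AdjoinRoot.root ((X : k[X][X]) ^ 2 - C h) ^ 2 = AdjoinRoot.of _ h := by
    rw [← sub_eq_zero, ← AdjoinRoot.eval₂_root, eval₂_sub, eval₂_C, eval₂_pow, eval₂_X]
  simp only [pellElemGen, map_mul, map_pow]
  exact add_mul_pow_expChar_of_sq_eq hp hroot _ _

end pellElemGen

namespace Polynomial

theorem dvd_of_comp_dvd_comp {K : Type*} [Field K] {f e q : K[X]} (hq : 0 < q.natDegree)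
    (h : f.comp q ∣ e.comp q) : f ∣ e := by
  have hcomp : ∀ r : K[X], r ≠ 0 → r.comp q ≠ 0 := fun r hr hrq => by
    rcases comp_eq_zero_iff.1 hrq with hr0 | ⟨-, hqC⟩
    · exact hr hr0
    · rw [hqC, natDegree_C] at hq
      exact hq.false
  rcases eq_or_ne f 0 with rfl | hf
  · rw [zero_comp, zero_dvd_iff] at h
    rw [zero_dvd_iff]
    by_contra he
    exact hcomp e he h
  rw [← EuclideanDomain.mod_eq_zero]
  by_contra hr
  have hdvd : f.comp q ∣ (e % f).comp q := by
    rw [EuclideanDomain.mod_eq_sub_mul_div, sub_comp, mul_comp]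
    exact dvd_sub h (dvd_mul_right _ _)
  have hle := natDegree_le_of_dvd hdvd (hcomp _ hr)
  rw [natDegree_comp, natDegree_comp] at hle
  have hlt := natDegree_lt_natDegree hr (degree_mod_lt e hf)
  exact (Nat.le_of_mul_le_mul_right hle hq).not_gt hlt

theorem exists_pow_eq_of_derivative_eq_zero {R : Type*} [CommRing R] [IsDomain R] (p : ℕ)
    [ExpChar R p] [PerfectRing R p] {f : R[X]} (hf : derivative f = 0) :
    ∃ r : R[X], r ^ p = f :=
  ⟨(contract p f).map (frobeniusEquiv R p).symm, by
    rw [← polynomial_expand_eq, expand_contract' p hf]⟩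


theorem derivative_eq_zero_of_sq_sub_mul_sq_eq_one {R : Type*} [CommRing R] [IsDomain R]
    (h2 : (2 : R) ≠ 0) {D x y : R[X]} (hD0 : D ≠ 0) (hD : derivative D = 0)
    (h : x ^ 2 - D * y ^ 2 = 1) : derivative x = 0 ∧ derivative y = 0 := by
  have hxy : x * derivative x = D * (y * derivative y) := by
    have hder := congrArg derivative h
    simp only [derivative_sub, derivative_mul, derivative_sq, hD, derivative_one] at hder
    refine mul_left_cancel₀ (C_ne_zero.2 h2) ?_
    linear_combination hder
  have hy' : derivative y = 0 := by
    by_contra hy'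
    have hy : y ≠ 0 := by rintro rfl; exact hy' derivative_zero
    have hx : x ∣ derivative y := by
      have hcop : IsCoprime x (D * y) := ⟨x, -y, by linear_combination h⟩
      exact hcop.dvd_of_dvd_mul_left ⟨derivative x, by linear_combination -hxy⟩
    have hdeg : 2 * x.natDegree = D.natDegree + 2 * y.natDegree := by
      have hx2 : x ^ 2 = D * y ^ 2 + C 1 := by rw [map_one]; linear_combination h
      rw [← natDegree_pow, hx2, natDegree_add_C, natDegree_mul hD0 (pow_ne_zero _ hy),
        natDegree_pow]
    have hlt := natDegree_derivative_lt fun h0 => hy' (derivative_of_natDegree_zero h0)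
    have hle := natDegree_le_of_dvd hx hy'
    omega
  refine ⟨?_, hy'⟩
  rw [hy', mul_zero, mul_zero, mul_eq_zero] at hxy
  rcases hxy with rfl | hx'
  · exact derivative_zero
  · exact hx'

end Polynomial

/-- **Descent of `p`-th powers (Proposition 18).**  Let `k` be a perfect field
of odd characteristic `p`, `g ∈ k[u]`, `q ∈ k[t]` nonconstant, and
`(x₁, y₁)` a solution of `x₁² − g·y₁² = 1`.  If the pull-back
`x₁(q) + y₁(q)·w` is a `p`-th power in `k[t][w]/(w² − g(q))`, then
`x₁ + y₁·w` is already a `p`-th power in `k[u][w]/(w² − g)`. -/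
theorem pell_pth_power_descent
    {k : Type*} [Field k] [PerfectField k]
    (p : ℕ) [Fact p.Prime] [CharP k p] (hp : 2 < p)
    (g : Polynomial k) (q : Polynomial k) (hq : 0 < q.natDegree)
    (x₁ y₁ : Polynomial k) (hsol : x₁ ^ 2 - g * y₁ ^ 2 = 1)
    (hpow : ∃ X Y : Polynomial k,
      (pellElemGen (g.comp q) X Y) ^ p = pellElemGen (g.comp q) (x₁.comp q) (y₁.comp q)) :
    ∃ x₀ y₀ : Polynomial k, (pellElemGen g x₀ y₀) ^ p = pellElemGen g x₁ y₁ := by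
  obtain ⟨j, hj⟩ : Odd p := (Fact.out : p.Prime).odd_of_ne_two hp.ne'
  obtain ⟨X, Y, hXY⟩ := hpow
  rw [pellElemGen_pow_expChar hj] at hXY
  obtain ⟨z, hz⟩ : g ^ j ∣ y₁ := by
    refine dvd_of_comp_dvd_comp hq ⟨Y ^ p, ?_⟩
    rw [pow_comp, ← (pellElemGen_inj.1 hXY).2, mul_comm]
  rcases eq_or_ne g 0 with rfl | hg
  · have hy₁ : y₁ = 0 := by rw [hz, zero_pow (by omega), zero_mul]
    have hx₁ : x₁ ^ 2 = 1 := by simpa [hy₁] using hsol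
    have hxp : x₁ ^ p = x₁ := by rw [hj, pow_succ, pow_mul, hx₁, one_pow, one_mul]
    refine ⟨x₁, 0, ?_⟩
    rw [pellElemGen_pow_expChar hj, hy₁, hxp, zero_pow (by omega), zero_mul]
  have hpell : x₁ ^ 2 - g ^ p * z ^ 2 = 1 := by
    rw [hz] at hsol
    rw [hj]
    linear_combination hsol
  have h2 : (2 : k) ≠ 0 := by
    exact_mod_cast (CharP.cast_eq_zero_iff k p 2).not.2 (Nat.not_dvd_of_pos_of_lt two_pos hp)
  obtain ⟨hx', hz'⟩ := derivative_eq_zero_of_sq_sub_mul_sq_eq_one h2 (pow_ne_zero p hg)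
    (by simp [derivative_pow]) hpell
  obtain ⟨x₀, rfl⟩ := exists_pow_eq_of_derivative_eq_zero p hx'
  obtain ⟨y₀, rfl⟩ := exists_pow_eq_of_derivative_eq_zero p hz'
  exact ⟨x₀, y₀, by rw [pellElemGen_pow_expChar hj, hz, mul_comm]⟩
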